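/- arXiv:1402.4685 — 3 statements merged into one kernel-verified Lean document; each statement's English description precedes it below -/
import Mathlib

section
/- Let N ≥ 1, let L be a real symmetric positive semidefinite N×N matrix with kernel 𝓜, let P be the orthogonal projection of ℂ^N onto the complexification of 𝓜, and let S be a real symmetric N×N matrix such that S + L is positive definite. Then there exist constants c₁ > 0 and C ≥ 0 such that for every z ∈ ℂ^N, Re⟨S z, z⟩ ≥ c₁ |z|² − C |(I−P) z|². -/
/-!
Write `Re⟨S z, z⟩ = Re⟨(S + L) z, z⟩ - Re⟨L z, z⟩`. The first term is at least `c₁ |z|²`, where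
`c₁ > 0` is the minimum of the positive definite form of `S + L` on the compact unit sphere. Since
`L` is symmetric and `L P z = 0`, the second term equals `Re⟨L w, w⟩ ≤ ‖L‖ |w|²` with `w = (I - P) z`.
-/

open Matrix

/-- The action of a real `N × N` matrix on `ℂ^N`, via complexification. -/
noncomputable def matC {N : ℕ} (M : Matrix (Fin N) (Fin N) ℝ) :
    EuclideanSpace ℂ (Fin N) →ₗ[ℂ] EuclideanSpace ℂ (Fin N) :=
  Matrix.toEuclideanLin (M.map (Complex.ofReal))

/-- The orthogonal projection of `ℂ^N` onto the complexification of `ker L`. -/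
noncomputable def projKer {N : ℕ} (L : Matrix (Fin N) (Fin N) ℝ)
    (z : EuclideanSpace ℂ (Fin N)) : EuclideanSpace ℂ (Fin N) :=
  (Submodule.orthogonalProjectionOnto (LinearMap.ker (matC L)) z : EuclideanSpace ℂ (Fin N))

namespace ContinuousLinearMap

variable {𝕜 E : Type*} [RCLike 𝕜] [NormedAddCommGroup E] [InnerProductSpace 𝕜 E]

theorem exists_pos_mul_sq_norm_le_reApplyInnerSelf [FiniteDimensional 𝕜 E] (T : E →L[𝕜] E)
    (hT : ∀ x ≠ 0, 0 < T.reApplyInnerSelf x) :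
    ∃ c > 0, ∀ x, c * ‖x‖ ^ 2 ≤ T.reApplyInnerSelf x := by
  cases subsingleton_or_nontrivial E with
  | inl _ => exact ⟨1, one_pos, fun x => by simp [Subsingleton.elim x 0, reApplyInnerSelf_apply]⟩
  | inr _ =>
    have : ProperSpace E := FiniteDimensional.proper_rclike 𝕜 E
    obtain ⟨v, hv⟩ := exists_ne (0 : E)
    have hsphere : (Metric.sphere (0 : E) 1).Nonempty :=
      ⟨(‖v‖⁻¹ : 𝕜) • v, mem_sphere_zero_iff_norm.2 (norm_smul_inv_norm hv)⟩
    obtain ⟨x₀, hx₀, hmin⟩ := (isCompact_sphere (0 : E) 1).exists_isMinOn hsphere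
      T.reApplyInnerSelf_continuous.continuousOn
    refine ⟨T.reApplyInnerSelf x₀, hT x₀ (ne_zero_of_mem_sphere one_ne_zero ⟨x₀, hx₀⟩),
      fun x => ?_⟩
    rcases eq_or_ne x 0 with rfl | hx
    · simp [reApplyInnerSelf_apply]
    -- the Rayleigh quotient of `x` is attained on the unit sphere
    obtain ⟨y, hy, hxy⟩ : T.rayleighQuotient x ∈ T.rayleighQuotient '' Metric.sphere 0 1 := by
      rw [← T.image_rayleigh_eq_image_rayleigh_sphere one_pos]
      exact ⟨x, hx, rfl⟩
    calc T.reApplyInnerSelf x₀ * ‖x‖ ^ 2 ≤ T.reApplyInnerSelf y * ‖x‖ ^ 2 := by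
          gcongr; exact hmin hy
      _ = T.rayleighQuotient x * ‖x‖ ^ 2 := by
          rw [← hxy, rayleighQuotient, mem_sphere_zero_iff_norm.1 hy]; simp
      _ = T.reApplyInnerSelf x := div_mul_cancel₀ _ (by positivity)

theorem reApplyInnerSelf_le_opNorm_mul_sq_norm (T : E →L[𝕜] E) (x : E) :
    T.reApplyInnerSelf x ≤ ‖T‖ * ‖x‖ ^ 2 := by
  grw [reApplyInnerSelf_apply, RCLike.re_le_norm, norm_inner_le_norm, le_opNorm, mul_assoc, ← sq]

theorem reApplyInnerSelf_sub_of_map_eq_zero {T : E →L[𝕜] E}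
    (hT : (T : E →ₗ[𝕜] E).IsSymmetric) {k : E} (hk : T k = 0) (x : E) :
    T.reApplyInnerSelf (x - k) = T.reApplyInnerSelf x := by
  have hk' : inner 𝕜 (T x) k = 0 := by rw [← coe_coe, hT, coe_coe, hk, inner_zero_right]
  simp [reApplyInnerSelf_apply, hk, inner_sub_right, hk']

end ContinuousLinearMap

section

variable {N : ℕ}

theorem matC_add (A B : Matrix (Fin N) (Fin N) ℝ) : matC (A + B) = matC A + matC B := by
  simp [matC, Matrix.map_add _ Complex.ofReal_add]

theorem Matrix.IsSymm.isSymmetric_matC {M : Matrix (Fin N) (Fin N) ℝ} (hM : M.IsSymm) :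
    (matC M).IsSymmetric := by
  rw [matC, isSymmetric_toEuclideanLin_iff]
  ext i j
  simpa using congrArg Complex.ofReal (hM.apply i j)

theorem re_inner_matC_self (M : Matrix (Fin N) (Fin N) ℝ) (z : EuclideanSpace ℂ (Fin N)) :
    (inner ℂ (matC M z) z).re
      = (fun i => (z i).re) ⬝ᵥ M *ᵥ (fun i => (z i).re)
        + (fun i => (z i).im) ⬝ᵥ M *ᵥ (fun i => (z i).im) := by
  rw [← inner_conj_symm, Complex.conj_re]
  have hdot : (inner ℂ z (matC M z) : ℂ)
      = star (z : Fin N → ℂ) ⬝ᵥ (M.map Complex.ofReal) *ᵥ (z : Fin N → ℂ) := by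
    simp [matC, inner, dotProduct, mulVec, mul_comm]
  rw [hdot]
  simp only [dotProduct, mulVec, map_apply, Pi.star_apply, Finset.mul_sum, Complex.re_sum,
    ← Finset.sum_add_distrib]
  refine Finset.sum_congr rfl fun i _ => Finset.sum_congr rfl fun j _ => ?_
  simp [Complex.mul_re, Complex.mul_im]

theorem Matrix.PosDef.re_inner_matC_self_pos {M : Matrix (Fin N) (Fin N) ℝ} (hM : M.PosDef)
    {z : EuclideanSpace ℂ (Fin N)} (hz : z ≠ 0) : 0 < (inner ℂ (matC M z) z).re := by
  rw [re_inner_matC_self]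
  have huv : (fun i => (z i).re) ≠ 0 ∨ (fun i => (z i).im) ≠ 0 := by
    by_contra! h
    exact hz (PiLp.ext fun i => Complex.ext (congrFun h.1 i) (congrFun h.2 i))
  have hnonneg (x : Fin N → ℝ) : 0 ≤ x ⬝ᵥ M *ᵥ x := by
    simpa using hM.posSemidef.dotProduct_mulVec_nonneg x
  have hpos {x : Fin N → ℝ} (hx : x ≠ 0) : 0 < x ⬝ᵥ M *ᵥ x := by
    simpa using hM.dotProduct_mulVec_pos hx
  rcases huv with h | h
  · exact add_pos_of_pos_of_nonneg (hpos h) (hnonneg _)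
  · exact add_pos_of_nonneg_of_pos (hnonneg _) (hpos h)

theorem matC_projKer (L : Matrix (Fin N) (Fin N) ℝ) (z : EuclideanSpace ℂ (Fin N)) :
    matC L (projKer L z) = 0 :=
  LinearMap.mem_ker.1 (Submodule.orthogonalProjectionOnto _ z).2

end

theorem statement1_general (N : ℕ)
    (L S : Matrix (Fin N) (Fin N) ℝ)
    (hLs : L.IsSymm) (hSL : (S + L).PosDef) :
    ∃ c₁ C : ℝ, 0 < c₁ ∧ 0 ≤ C ∧
      ∀ z : EuclideanSpace ℂ (Fin N),
        (inner ℂ (matC S z) z : ℂ).re ≥ c₁ * ‖z‖ ^ 2 - C * ‖z - projKer L z‖ ^ 2 := by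
  set T : Matrix (Fin N) (Fin N) ℝ → _ := fun M => LinearMap.toContinuousLinearMap (matC M)
  obtain ⟨c₁, hc₁, hcoercive⟩ := (T (S + L)).exists_pos_mul_sq_norm_le_reApplyInnerSelf
    fun z hz => hSL.re_inner_matC_self_pos hz
  refine ⟨c₁, ‖T L‖, hc₁, norm_nonneg _, fun z => ?_⟩
  have hL_le := (T L).reApplyInnerSelf_le_opNorm_mul_sq_norm (z - projKer L z)
  rw [(T L).reApplyInnerSelf_sub_of_map_eq_zero hLs.isSymmetric_matC (matC_projKer L z)] at hL_le
  have hSL_ge := hcoercive z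
  simp only [T, ContinuousLinearMap.reApplyInnerSelf_apply, LinearMap.coe_toContinuousLinearMap',
    RCLike.re_to_complex, matC_add, LinearMap.add_apply, inner_add_left, Complex.add_re] at hL_le hSL_ge
  linarith

theorem statement1 (N : ℕ) (hN : 1 ≤ N)
    (L S : Matrix (Fin N) (Fin N) ℝ)
    (hL : L.PosSemidef) (hLs : L.IsSymm) (hS : S.IsSymm) (hSL : (S + L).PosDef) :
    ∃ c₁ C : ℝ, 0 < c₁ ∧ 0 ≤ C ∧
      ∀ z : EuclideanSpace ℂ (Fin N),
        (inner ℂ (matC S z) z : ℂ).re ≥ c₁ * ‖z‖ ^ 2 - C * ‖z - projKer L z‖ ^ 2 :=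
  statement1_general N L S hLs hSL
end

section
/- Let n, N ≥ 1 and let A⁰, A¹, …, Aⁿ, L be real N×N matrices with A⁰ symmetric positive definite, each A^j symmetric, and L symmetric positive semidefinite. Suppose that for every ξ ∈ ℝⁿ with ξ ≠ 0, every λ ∈ ℂ with det(λ A⁰ + i A(ξ) + L) = 0 satisfies Re λ < 0. Then the stability condition holds: if φ ∈ ℝ^N satisfies L φ = 0 and (λ A⁰ + A(ω)) φ = 0 for some λ ∈ ℝ and some ω ∈ S^{n−1}, then φ = 0. -/
/-!
If a nonzero real `φ` lies in `ker L ∩ ker (λ A⁰ + A(ω))`, then it is a kernel vector of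
`(iλ) A⁰ + i A(ω) + L = i (λ A⁰ + A(ω)) + L`, so `iλ` is a root of the dispersion relation at
`ξ = ω ≠ 0` with real part `0`, contradicting strict dissipativity.
-/

open Matrix

lemma Matrix.map_ofReal_mulVec_eq_zero {ι : Type*} [Fintype ι] {M : Matrix ι ι ℝ} {φ : ι → ℝ}
    (h : M *ᵥ φ = 0) : M.map Complex.ofReal *ᵥ (Complex.ofReal ∘ φ) = 0 := by
  ext i
  exact (RingHom.map_mulVec Complex.ofRealHom M φ i).symm.trans (by simp [h])

lemma Matrix.det_imaginary_pencil_eq_zero {ι : Type*} [Fintype ι] [DecidableEq ι]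
    (A0 S L : Matrix ι ι ℝ) (lam : ℝ) {φ : ι → ℝ} (hφ : φ ≠ 0) (hLφ : L *ᵥ φ = 0)
    (hSφ : (lam • A0 + S) *ᵥ φ = 0) :
    ((Complex.I * lam) • A0.map Complex.ofReal + Complex.I • S.map Complex.ofReal
      + L.map Complex.ofReal).det = 0 := by
  have hpencil : (Complex.I * lam) • A0.map Complex.ofReal + Complex.I • S.map Complex.ofReal
      = Complex.I • (lam • A0 + S).map Complex.ofReal := by
    ext i j
    simp only [add_apply, smul_apply, map_apply, smul_eq_mul, Complex.ofReal_add,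
      Complex.ofReal_mul]
    ring
  have hφc : Complex.ofReal ∘ φ ≠ 0 := fun h =>
    hφ (funext fun i => Complex.ofReal_injective (congrFun h i))
  refine Matrix.exists_mulVec_eq_zero_iff.mp ⟨_, hφc, ?_⟩
  rw [hpencil, add_mulVec, smul_mulVec, map_ofReal_mulVec_eq_zero hSφ,
    map_ofReal_mulVec_eq_zero hLφ, smul_zero, add_zero]

theorem statement5_general (n N : ℕ)
    (A0 : Matrix (Fin N) (Fin N) ℝ) (A : Fin n → Matrix (Fin N) (Fin N) ℝ)
    (L : Matrix (Fin N) (Fin N) ℝ)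
    (hspec : ∀ ξ : EuclideanSpace ℝ (Fin n), ξ ≠ 0 → ∀ lam : ℂ,
      (lam • A0.map (Complex.ofReal)
        + Complex.I • ((∑ j, ξ j • A j).map (Complex.ofReal))
        + L.map (Complex.ofReal)).det = 0 → lam.re < 0) :
    ∀ (φ : Fin N → ℝ) (lam : ℝ) (ω : EuclideanSpace ℝ (Fin n)),
      ω ∈ Metric.sphere (0 : EuclideanSpace ℝ (Fin n)) 1 →
      L.mulVec φ = 0 →
      (lam • A0 + ∑ j, ω j • A j).mulVec φ = 0 →
      φ = 0 := by
  intro φ lam ω hω hLφ hφ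
  by_contra hφ0
  have hre := hspec ω (ne_zero_of_mem_sphere one_ne_zero ⟨ω, hω⟩) (Complex.I * lam)
    (det_imaginary_pencil_eq_zero A0 _ L lam hφ0 hLφ hφ)
  simp at hre

theorem statement5 (n N : ℕ) (hn : 1 ≤ n) (hN : 1 ≤ N)
    (A0 : Matrix (Fin N) (Fin N) ℝ) (A : Fin n → Matrix (Fin N) (Fin N) ℝ)
    (L : Matrix (Fin N) (Fin N) ℝ)
    (hA0 : A0.PosDef) (hA0s : A0.IsSymm) (hA : ∀ j, (A j).IsSymm)
    (hL : L.PosSemidef) (hLs : L.IsSymm)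
    (hspec : ∀ ξ : EuclideanSpace ℝ (Fin n), ξ ≠ 0 → ∀ lam : ℂ,
      (lam • A0.map (Complex.ofReal)
        + Complex.I • ((∑ j, ξ j • A j).map (Complex.ofReal))
        + L.map (Complex.ofReal)).det = 0 → lam.re < 0) :
    ∀ (φ : Fin N → ℝ) (lam : ℝ) (ω : EuclideanSpace ℝ (Fin n)),
      ω ∈ Metric.sphere (0 : EuclideanSpace ℝ (Fin n)) 1 →
      L.mulVec φ = 0 →
      (lam • A0 + ∑ j, ω j • A j).mulVec φ = 0 →
      φ = 0 :=
  statement5_general n N A0 A L hspec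
end

section
/- Let n ≥ 1, k ≥ 0 and m, ϱ > 0, and set θ := (ϱ + k)/(ϱ + k + m). Then there exists a constant C > 0, depending only on n, k, m, ϱ, such that for every measurable u : ℝⁿ → ℂ, (∫_{ℝⁿ} |ξ|^{2k} |u(ξ)|² dξ)^{1/2} ≤ C (∫_{ℝⁿ} |ξ|^{2(k+m)} |u(ξ)|² dξ)^{θ/2} · ( sup_{r>0} r^{−ϱ} ( ∫_{r ≤ |ξ| < 2r} |u(ξ)|² dξ )^{1/2} )^{1−θ}, where both sides are interpreted as values in [0,∞]. -/
/-!
Split the integral `A = ∫ |ξ|^{2k} |u|²` at a radius `R`. Outside the ball,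
`|ξ|^{2k} ≤ R^{-2m} |ξ|^{2(k+m)}`. Inside, the dyadic annuli `R 2^{-j-1} ≤ |ξ| < R 2^{-j}` cover
everything but the null set `{0}`, and the annulus `j` contributes at most
`(R 2^{-j})^{2k} (R 2^{-j-1})^{2ϱ} M²`, where `M` is the Besov supremum; summing
the geometric series gives `A ≤ R^{-2m} B + C R^{2(k+ϱ)} M²` for all `R > 0`,
and choosing `R` to balance the two terms yields `A ≤ (1 + C) B^θ M^{2(1-θ)}`.
-/

open scoped ENNReal
open MeasureTheory Set Real

lemma exists_nat_mem_Ico_div_two_pow {x R : ℝ} (hx : 0 < x) (hxR : x < R) :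
    ∃ j : ℕ, x ∈ Ico (R / 2 ^ (j + 1)) (2 * (R / 2 ^ (j + 1))) := by
  obtain ⟨i, hi₁, hi₂⟩ := exists_mem_Ioc_zpow (div_pos (hx.trans hxR) hx) one_lt_two
  have hi : 0 ≤ i := by
    by_contra! hi
    have : (2 : ℝ) ^ (i + 1) ≤ 1 := zpow_le_one_of_nonpos₀ one_le_two (by omega)
    linarith [(one_lt_div hx).2 hxR]
  lift i to ℕ using hi
  simp only [← Nat.cast_add_one, zpow_natCast] at hi₁ hi₂
  rw [lt_div_iff₀ hx] at hi₁
  rw [div_le_iff₀ hx] at hi₂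
  refine ⟨i, (div_le_iff₀ (by positivity)).2 (by linarith), ?_⟩
  rw [pow_succ, ← div_div, mul_div_cancel₀ _ two_ne_zero, lt_div_iff₀ (by positivity)]
  linarith

lemma Real.exists_rpow_neg_mul_eq_and_rpow_mul_eq {a b B D : ℝ} (ha : 0 < a) (hb : 0 < b)
    (hB : 0 < B) (hD : 0 < D) :
    ∃ R > 0, R ^ (-a) * B = B ^ (b / (b + a)) * D ^ (1 - b / (b + a)) ∧
      R ^ b * D = B ^ (b / (b + a)) * D ^ (1 - b / (b + a)) := by
  obtain ⟨β, rfl⟩ : ∃ β, B = exp β := ⟨log B, (exp_log hB).symm⟩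
  obtain ⟨δ, rfl⟩ : ∃ δ, D = exp δ := ⟨log D, (exp_log hD).symm⟩
  -- `R ^ (b + a) = B / D`; in logarithmic coordinates both identities are linear.
  refine ⟨exp ((β - δ) / (b + a)), exp_pos _, ?_, ?_⟩ <;>
  · simp only [rpow_def_of_pos (exp_pos _), log_exp, ← exp_add]
    congr 1
    field_simp
    ring

theorem ENNReal.le_ofReal_mul_rpow_mul_rpow_of_forall_le {A B D : ℝ≥0∞} {a b c : ℝ}
    (ha : 0 < a) (hb : 0 < b) (hc : 0 ≤ c)
    (h : ∀ R : ℝ, 0 < R → A ≤ ENNReal.ofReal (R ^ (-a)) * B + ENNReal.ofReal (c * R ^ b) * D)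
    (h0 : B = 0 ∨ D = 0 → A = 0) :
    A ≤ ENNReal.ofReal (1 + c) * B ^ (b / (b + a)) * D ^ (1 - b / (b + a)) := by
  have hθ : 0 < b / (b + a) := by positivity
  have hθ' : 0 < 1 - b / (b + a) := by rw [sub_pos, div_lt_one (by positivity)]; linarith
  by_cases hdeg : B = 0 ∨ D = 0
  · simp [h0 hdeg]
  push Not at hdeg
  by_cases htop : B = ⊤ ∨ D = ⊤
  · rcases htop with rfl | rfl <;>
      simp [ENNReal.rpow_eq_zero_iff, ENNReal.top_mul, ENNReal.mul_top, hdeg.1, hdeg.2, hθ, hθ',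
        not_lt.2 hθ.le, not_lt.2 hθ'.le, ENNReal.top_rpow_of_pos, add_pos_of_pos_of_nonneg one_pos hc]
  push Not at htop
  obtain ⟨B, hB, rfl⟩ : ∃ B' : ℝ, 0 < B' ∧ B = ENNReal.ofReal B' :=
    ⟨B.toReal, ENNReal.toReal_pos hdeg.1 htop.1, (ENNReal.ofReal_toReal htop.1).symm⟩
  obtain ⟨D, hD, rfl⟩ : ∃ D' : ℝ, 0 < D' ∧ D = ENNReal.ofReal D' :=
    ⟨D.toReal, ENNReal.toReal_pos hdeg.2 htop.2, (ENNReal.ofReal_toReal htop.2).symm⟩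
  obtain ⟨R, hR, hhigh, hlow⟩ := Real.exists_rpow_neg_mul_eq_and_rpow_mul_eq ha hb hB hD
  calc A ≤ ENNReal.ofReal (R ^ (-a)) * ENNReal.ofReal B
        + ENNReal.ofReal (c * R ^ b) * ENNReal.ofReal D := h R hR
    _ = ENNReal.ofReal ((1 + c) * (B ^ (b / (b + a)) * D ^ (1 - b / (b + a)))) := by
      rw [← ENNReal.ofReal_mul (by positivity), ← ENNReal.ofReal_mul (by positivity),
        mul_assoc, hhigh, hlow, ← ENNReal.ofReal_add (by positivity) (by positivity)]
      congr 1
      ring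
    _ = _ := by
      rw [ENNReal.ofReal_mul (by positivity), ENNReal.ofReal_mul (by positivity),
        ENNReal.ofReal_rpow_of_pos hB, ENNReal.ofReal_rpow_of_pos hD, mul_assoc]

theorem ENNReal.le_ofReal_rpow_mul_sq {I M : ℝ≥0∞} {r ϱ : ℝ} (hr : 0 < r)
    (h : ENNReal.ofReal (r ^ (-ϱ)) * I ^ (1 / 2 : ℝ) ≤ M) :
    I ≤ ENNReal.ofReal (r ^ (2 * ϱ)) * M ^ 2 := by
  have hI : I ^ (1 / 2 : ℝ)
      = ENNReal.ofReal (r ^ ϱ) * (ENNReal.ofReal (r ^ (-ϱ)) * I ^ (1 / 2 : ℝ)) := by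
    rw [← mul_assoc, ← ENNReal.ofReal_mul (by positivity), ← Real.rpow_add hr, add_neg_cancel,
      Real.rpow_zero, ENNReal.ofReal_one, one_mul]
  calc I = (I ^ (1 / 2 : ℝ)) ^ 2 := by
        rw [← ENNReal.rpow_natCast, ← ENNReal.rpow_mul]; norm_num
    _ ≤ (ENNReal.ofReal (r ^ ϱ) * M) ^ 2 := by rw [hI]; gcongr
    _ = ENNReal.ofReal (r ^ (2 * ϱ)) * M ^ 2 := by
      rw [mul_pow, ← ENNReal.ofReal_pow (by positivity), ← Real.rpow_natCast, ← Real.rpow_mul hr.le,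
        mul_comm ϱ]
      norm_num

theorem ENNReal.rpow_half_le_of_le_mul_sq {A B M : ℝ≥0∞} {c θ : ℝ} (hc : 0 ≤ c)
    (h : A ≤ ENNReal.ofReal c * B ^ θ * (M ^ 2) ^ (1 - θ)) :
    A ^ (1 / 2 : ℝ) ≤ ENNReal.ofReal (c ^ (1 / 2 : ℝ)) * B ^ (θ / 2) * M ^ (1 - θ) := by
  calc A ^ (1 / 2 : ℝ) ≤ (ENNReal.ofReal c * B ^ θ * (M ^ 2) ^ (1 - θ)) ^ (1 / 2 : ℝ) :=
        ENNReal.rpow_le_rpow h (by norm_num)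
    _ = _ := by
      rw [ENNReal.mul_rpow_of_nonneg _ _ (by norm_num),
        ENNReal.mul_rpow_of_nonneg _ _ (by norm_num),
        ENNReal.ofReal_rpow_of_nonneg hc (by norm_num), ← ENNReal.rpow_natCast,
        ← ENNReal.rpow_mul, ← ENNReal.rpow_mul, ← ENNReal.rpow_mul]
      congr 2 <;> ring_nf

/-- The sum `∑ⱼ 2^s (2^{-(j+1)})^{s+t}` produced by the dyadic annuli inside a ball of radius 1. -/
noncomputable def dyadicConst (s t : ℝ) : ℝ := 2 ^ s / (2 ^ (s + t) - 1)

lemma dyadicConst_nonneg {s t : ℝ} (hst : 0 < s + t) : 0 ≤ dyadicConst s t :=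
  div_nonneg (by positivity) (sub_nonneg.2 (one_le_rpow one_le_two hst.le))

lemma hasSum_dyadicConst {s t R : ℝ} (hst : 0 < s + t) (hR : 0 ≤ R) :
    HasSum (fun j : ℕ => 2 ^ s * (R / 2 ^ (j + 1)) ^ (s + t)) (dyadicConst s t * R ^ (s + t)) := by
  have hq : 1 < (2 : ℝ) ^ (s + t) := one_lt_rpow one_lt_two hst
  have hgeom := (hasSum_geometric_of_lt_one (by positivity) (inv_lt_one_of_one_lt₀ hq)).mul_left
    (2 ^ s * R ^ (s + t) * ((2 : ℝ) ^ (s + t))⁻¹)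
  have hterm : ∀ j : ℕ, 2 ^ s * (R / 2 ^ (j + 1)) ^ (s + t)
      = 2 ^ s * R ^ (s + t) * ((2 : ℝ) ^ (s + t))⁻¹ * ((2 : ℝ) ^ (s + t))⁻¹ ^ j := by
    intro j
    rw [div_rpow hR (by positivity), ← rpow_natCast, ← rpow_mul zero_le_two, mul_comm _ (s + t),
      rpow_mul zero_le_two, rpow_natCast, inv_pow, pow_succ]
    field_simp
  have hsum : dyadicConst s t * R ^ (s + t)
      = 2 ^ s * R ^ (s + t) * ((2 : ℝ) ^ (s + t))⁻¹ * (1 - ((2 : ℝ) ^ (s + t))⁻¹)⁻¹ := by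
    rw [dyadicConst]
    field_simp
  simpa only [hterm, hsum] using hgeom

section Annuli

variable {E : Type*} [NormedAddCommGroup E] [MeasurableSpace E]
  {μ : Measure E} {f : E → ℝ≥0∞} {D : ℝ≥0∞} {s t a r R : ℝ}

lemma setLIntegral_annulus_rpow_mul_le (hf : Measurable f) (hs : 0 ≤ s) (hr : 0 < r)
    (hann : ∫⁻ ξ in (‖·‖) ⁻¹' Ico r (2 * r), f ξ ∂μ ≤ ENNReal.ofReal (r ^ t) * D) :
    ∫⁻ ξ in (‖·‖) ⁻¹' Ico r (2 * r), ENNReal.ofReal (‖ξ‖ ^ s) * f ξ ∂μ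
      ≤ ENNReal.ofReal (2 ^ s * r ^ (s + t)) * D := by
  calc ∫⁻ ξ in (‖·‖) ⁻¹' Ico r (2 * r), ENNReal.ofReal (‖ξ‖ ^ s) * f ξ ∂μ
      ≤ ∫⁻ ξ in (‖·‖) ⁻¹' Ico r (2 * r), ENNReal.ofReal ((2 * r) ^ s) * f ξ ∂μ :=
        setLIntegral_mono (hf.const_mul _) fun ξ hξ => by
          gcongr
          exact hξ.2.le
    _ = ENNReal.ofReal ((2 * r) ^ s) * ∫⁻ ξ in (‖·‖) ⁻¹' Ico r (2 * r), f ξ ∂μ :=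
        lintegral_const_mul _ hf
    _ ≤ ENNReal.ofReal ((2 * r) ^ s) * (ENNReal.ofReal (r ^ t) * D) := by gcongr
    _ = ENNReal.ofReal (2 ^ s * r ^ (s + t)) * D := by
        rw [← mul_assoc, ← ENNReal.ofReal_mul (by positivity), mul_rpow zero_le_two hr.le,
          rpow_add hr, mul_assoc]

lemma setLIntegral_norm_lt_rpow_mul_le [NullSingletonClass μ] (hf : Measurable f) (hs : 0 ≤ s)
    (hst : 0 < s + t)
    (hann : ∀ r, 0 < r → ∫⁻ ξ in (‖·‖) ⁻¹' Ico r (2 * r), f ξ ∂μ ≤ ENNReal.ofReal (r ^ t) * D)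
    (hR : 0 < R) :
    ∫⁻ ξ in {ξ | ‖ξ‖ < R}, ENNReal.ofReal (‖ξ‖ ^ s) * f ξ ∂μ
      ≤ ENNReal.ofReal (dyadicConst s t * R ^ (s + t)) * D := by
  have hcover : {ξ : E | ‖ξ‖ < R} \ {0}
      ⊆ ⋃ j : ℕ, (‖·‖) ⁻¹' Ico (R / 2 ^ (j + 1)) (2 * (R / 2 ^ (j + 1))) := by
    rintro ξ ⟨hξR, hξ0⟩
    exact mem_iUnion.2 (exists_nat_mem_Ico_div_two_pow (norm_pos_iff.2 hξ0) hξR)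
  calc ∫⁻ ξ in {ξ | ‖ξ‖ < R}, ENNReal.ofReal (‖ξ‖ ^ s) * f ξ ∂μ
      = ∫⁻ ξ in {ξ | ‖ξ‖ < R} \ {0}, ENNReal.ofReal (‖ξ‖ ^ s) * f ξ ∂μ :=
        (setLIntegral_congr (sdiff_null_ae_eq_self (measure_singleton 0))).symm
    _ ≤ ∑' j : ℕ, ∫⁻ ξ in (‖·‖) ⁻¹' Ico (R / 2 ^ (j + 1)) (2 * (R / 2 ^ (j + 1))),
          ENNReal.ofReal (‖ξ‖ ^ s) * f ξ ∂μ :=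
        (lintegral_mono_set hcover).trans (lintegral_iUnion_le _ _)
    _ ≤ ∑' j : ℕ, ENNReal.ofReal (2 ^ s * (R / 2 ^ (j + 1)) ^ (s + t)) * D :=
        ENNReal.tsum_le_tsum fun j =>
          setLIntegral_annulus_rpow_mul_le hf hs (by positivity) (hann _ (by positivity))
    _ = ENNReal.ofReal (dyadicConst s t * R ^ (s + t)) * D := by
        have hsum := hasSum_dyadicConst hst hR.le
        rw [ENNReal.tsum_mul_right, ← ENNReal.ofReal_tsum_of_nonneg (fun j => by positivity)
          hsum.summable, hsum.tsum_eq]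

lemma setLIntegral_le_norm_rpow_mul_le [OpensMeasurableSpace E] (hf : Measurable f) (ha : 0 ≤ a)
    (hR : 0 < R) :
    ∫⁻ ξ in {ξ | R ≤ ‖ξ‖}, ENNReal.ofReal (‖ξ‖ ^ s) * f ξ ∂μ
      ≤ ENNReal.ofReal (R ^ (-a)) * ∫⁻ ξ, ENNReal.ofReal (‖ξ‖ ^ (s + a)) * f ξ ∂μ := by
  have hmeas : Measurable fun ξ : E => ENNReal.ofReal (‖ξ‖ ^ (s + a)) * f ξ := by fun_prop
  have hweight : ∀ ξ ∈ {ξ : E | R ≤ ‖ξ‖}, ENNReal.ofReal (‖ξ‖ ^ s) * f ξ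
      ≤ ENNReal.ofReal (R ^ (-a)) * (ENNReal.ofReal (‖ξ‖ ^ (s + a)) * f ξ) := by
    intro ξ (hξ : R ≤ ‖ξ‖)
    have hξ0 : 0 < ‖ξ‖ := hR.trans_le hξ
    rw [← mul_assoc, ← ENNReal.ofReal_mul (by positivity)]
    gcongr
    calc ‖ξ‖ ^ s = R ^ (-a) * R ^ a * ‖ξ‖ ^ s := by
          rw [← rpow_add hR, neg_add_cancel, rpow_zero, one_mul]
      _ ≤ R ^ (-a) * ‖ξ‖ ^ a * ‖ξ‖ ^ s := by gcongr
      _ = R ^ (-a) * ‖ξ‖ ^ (s + a) := by rw [rpow_add hξ0]; ring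
  calc ∫⁻ ξ in {ξ | R ≤ ‖ξ‖}, ENNReal.ofReal (‖ξ‖ ^ s) * f ξ ∂μ
      ≤ ∫⁻ ξ in {ξ | R ≤ ‖ξ‖},
          ENNReal.ofReal (R ^ (-a)) * (ENNReal.ofReal (‖ξ‖ ^ (s + a)) * f ξ) ∂μ :=
        setLIntegral_mono (hmeas.const_mul _) hweight
    _ ≤ ∫⁻ ξ, ENNReal.ofReal (R ^ (-a)) * (ENNReal.ofReal (‖ξ‖ ^ (s + a)) * f ξ) ∂μ :=
        setLIntegral_le_lintegral _ _
    _ = ENNReal.ofReal (R ^ (-a)) * ∫⁻ ξ, ENNReal.ofReal (‖ξ‖ ^ (s + a)) * f ξ ∂μ :=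
        lintegral_const_mul _ hmeas

lemma lintegral_rpow_mul_le_add [OpensMeasurableSpace E] [NullSingletonClass μ]
    (hf : Measurable f) (hs : 0 ≤ s) (ha : 0 ≤ a) (hst : 0 < s + t)
    (hann : ∀ r, 0 < r → ∫⁻ ξ in (‖·‖) ⁻¹' Ico r (2 * r), f ξ ∂μ ≤ ENNReal.ofReal (r ^ t) * D)
    (hR : 0 < R) :
    ∫⁻ ξ, ENNReal.ofReal (‖ξ‖ ^ s) * f ξ ∂μ
      ≤ ENNReal.ofReal (R ^ (-a)) * ∫⁻ ξ, ENNReal.ofReal (‖ξ‖ ^ (s + a)) * f ξ ∂μ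
        + ENNReal.ofReal (dyadicConst s t * R ^ (s + t)) * D := by
  rw [← lintegral_add_compl _ (measurableSet_lt measurable_norm measurable_const : MeasurableSet
    {ξ : E | ‖ξ‖ < R}), add_comm, compl_ofPred]
  simp only [not_lt]
  exact add_le_add (setLIntegral_le_norm_rpow_mul_le hf ha hR)
    (setLIntegral_norm_lt_rpow_mul_le hf hs hst hann hR)

lemma ae_eq_zero_of_lintegral_rpow_mul_eq_zero [NullSingletonClass μ] [OpensMeasurableSpace E]
    (hf : Measurable f) (h : ∫⁻ ξ, ENNReal.ofReal (‖ξ‖ ^ s) * f ξ ∂μ = 0) : f =ᵐ[μ] 0 := by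
  filter_upwards [(lintegral_eq_zero_iff (by fun_prop)).1 h, Measure.ae_ne μ 0] with ξ hξ hξ0
  have hweight : ENNReal.ofReal (‖ξ‖ ^ s) ≠ 0 :=
    (ENNReal.ofReal_pos.2 (rpow_pos_of_pos (norm_pos_iff.2 hξ0) s)).ne'
  exact (mul_eq_zero.1 hξ).resolve_left hweight

lemma ae_eq_zero_of_setLIntegral_annulus_eq_zero [NullSingletonClass μ] [OpensMeasurableSpace E]
    (hf : Measurable f) (h : ∀ r, 0 < r → ∫⁻ ξ in (‖·‖) ⁻¹' Ico r (2 * r), f ξ ∂μ = 0) :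
    f =ᵐ[μ] 0 := by
  have hann : ∀ᵐ ξ ∂μ, ∀ i : ℤ, ξ ∈ (‖·‖) ⁻¹' Ico ((2 : ℝ) ^ i) (2 * 2 ^ i) → f ξ = 0 :=
    ae_all_iff.2 fun i => (setLIntegral_eq_zero_iff (measurable_norm measurableSet_Ico) hf).1
      (h _ (zpow_pos two_pos i))
  filter_upwards [hann, Measure.ae_ne μ 0] with ξ hξ hξ0
  obtain ⟨i, hi⟩ := exists_mem_Ico_zpow (norm_pos_iff.2 hξ0) one_lt_two
  rw [zpow_add_one₀ two_ne_zero, mul_comm] at hi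
  exact hξ i hi

theorem lintegral_rpow_mul_le_interpolation [OpensMeasurableSpace E] [NullSingletonClass μ]
    (hf : Measurable f) (hs : 0 ≤ s) (ha : 0 < a) (hst : 0 < s + t)
    (hann : ∀ r, 0 < r → ∫⁻ ξ in (‖·‖) ⁻¹' Ico r (2 * r), f ξ ∂μ ≤ ENNReal.ofReal (r ^ t) * D) :
    ∫⁻ ξ, ENNReal.ofReal (‖ξ‖ ^ s) * f ξ ∂μ
      ≤ ENNReal.ofReal (1 + dyadicConst s t)
        * (∫⁻ ξ, ENNReal.ofReal (‖ξ‖ ^ (s + a)) * f ξ ∂μ) ^ ((s + t) / (s + t + a))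
        * D ^ (1 - (s + t) / (s + t + a)) := by
  refine ENNReal.le_ofReal_mul_rpow_mul_rpow_of_forall_le ha hst (dyadicConst_nonneg hst)
    (fun R hR => lintegral_rpow_mul_le_add hf hs ha.le hst hann hR) ?_
  have hA0 : f =ᵐ[μ] 0 → ∫⁻ ξ, ENNReal.ofReal (‖ξ‖ ^ s) * f ξ ∂μ = 0 := fun hf0 =>
    (lintegral_eq_zero_iff (by fun_prop)).2 (hf0.mono fun ξ hξ => by simp [hξ])
  rintro (hB | rfl)
  · exact hA0 (ae_eq_zero_of_lintegral_rpow_mul_eq_zero hf hB)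
  · exact hA0 (ae_eq_zero_of_setLIntegral_annulus_eq_zero hf fun r hr =>
      nonpos_iff_eq_zero.1 ((hann r hr).trans_eq (mul_zero _)))

end Annuli

theorem statement9 (n : ℕ) (hn : 1 ≤ n) (k m ϱ : ℝ) (hk : 0 ≤ k) (hm : 0 < m) (hϱ : 0 < ϱ) :
    ∃ C : ℝ, 0 < C ∧ ∀ u : EuclideanSpace ℝ (Fin n) → ℂ, Measurable u →
      (∫⁻ ξ, ENNReal.ofReal (‖ξ‖ ^ (2 * k) * ‖u ξ‖ ^ 2)) ^ ((1 : ℝ) / 2)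
        ≤ ENNReal.ofReal C
          * (∫⁻ ξ, ENNReal.ofReal (‖ξ‖ ^ (2 * (k + m)) * ‖u ξ‖ ^ 2))
              ^ (((ϱ + k) / (ϱ + k + m)) / 2)
          * (⨆ r : {r : ℝ // 0 < r},
              ENNReal.ofReal ((r : ℝ) ^ (-ϱ))
                * (∫⁻ ξ in {ξ : EuclideanSpace ℝ (Fin n) | (r : ℝ) ≤ ‖ξ‖ ∧ ‖ξ‖ < 2 * (r : ℝ)},
                    ENNReal.ofReal (‖u ξ‖ ^ 2)) ^ ((1 : ℝ) / 2))
            ^ (1 - (ϱ + k) / (ϱ + k + m)) := by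
  have : Nonempty (Fin n) := ⟨⟨0, hn⟩⟩
  have hc := dyadicConst_nonneg (s := 2 * k) (t := 2 * ϱ) (by positivity)
  refine ⟨(1 + dyadicConst (2 * k) (2 * ϱ)) ^ (1 / 2 : ℝ), rpow_pos_of_pos (by linarith) _,
    fun u hu => ?_⟩
  set M := ⨆ r : {r : ℝ // 0 < r}, ENNReal.ofReal ((r : ℝ) ^ (-ϱ))
    * (∫⁻ ξ in {ξ : EuclideanSpace ℝ (Fin n) | (r : ℝ) ≤ ‖ξ‖ ∧ ‖ξ‖ < 2 * (r : ℝ)},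
      ENNReal.ofReal (‖u ξ‖ ^ 2)) ^ ((1 : ℝ) / 2)
  have hθ : (2 * k + 2 * ϱ) / (2 * k + 2 * ϱ + 2 * m) = (ϱ + k) / (ϱ + k + m) := by
    rw [show 2 * k + 2 * ϱ + 2 * m = 2 * (ϱ + k + m) by ring,
      show 2 * k + 2 * ϱ = 2 * (ϱ + k) by ring, mul_div_mul_left _ _ two_ne_zero]
  have hweight : ∀ e : ℝ, ∀ ξ : EuclideanSpace ℝ (Fin n),
      ENNReal.ofReal (‖ξ‖ ^ e * ‖u ξ‖ ^ 2)
        = ENNReal.ofReal (‖ξ‖ ^ e) * ENNReal.ofReal (‖u ξ‖ ^ 2) :=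
    fun e ξ => ENNReal.ofReal_mul (by positivity)
  have hann : ∀ r : ℝ, 0 < r → ∫⁻ ξ in (‖·‖) ⁻¹' Ico r (2 * r), ENNReal.ofReal (‖u ξ‖ ^ 2)
      ≤ ENNReal.ofReal (r ^ (2 * ϱ)) * M ^ 2 := fun r hr =>
    ENNReal.le_ofReal_rpow_mul_sq hr (le_iSup_of_le (⟨r, hr⟩ : {r : ℝ // 0 < r}) le_rfl)
  have key := lintegral_rpow_mul_le_interpolation (s := 2 * k) (a := 2 * m)
    (f := fun ξ => ENNReal.ofReal (‖u ξ‖ ^ 2)) (by fun_prop) (by positivity) (by positivity)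
    (by positivity) hann
  rw [hθ, ← mul_add] at key
  simp only [hweight]
  exact ENNReal.rpow_half_le_of_le_mul_sq (by positivity) key
end
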